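/- Pointwise robust stabilization (scalar frequency-wise version of the stabilizing-controllers theorem): let g₁, g₂ be complex numbers and c a nonzero complex number. If κ(g₁, g₂) < κ(g₁, c⁻¹), then 1 − c·g₂ ≠ 0, and moreover the perturbed pointwise stability margin satisfies the degradation bound κ(g₂, c⁻¹) ≥ κ(g₁, c⁻¹) − κ(g₁, g₂). -/

import Mathlib

/-
The chordal distance `κ` satisfies the triangle inequality, so
`κ(g₁, c⁻¹) ≤ κ(g₁, g₂) + κ(g₂, c⁻¹)`, which is the degradation bound. Under the hypothesis
this forces `κ(g₂, c⁻¹) > 0`, hence `g₂ ≠ c⁻¹`, i.e. `1 - c g₂ ≠ 0`.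

The triangle inequality comes from the identity
`(a - c)(1 + b̄ b) = (a - b)(1 + b̄ c) + (b - c)(1 + b̄ a)` together with the Lagrange-type
identity `|1 + b̄ c|² + |b - c|² = (1 + |b|²)(1 + |c|²)`.
-/

/-- The pointwise ν-gap (chordal distance) between two complex numbers. -/
noncomputable def kappa (a b : ℂ) : ℝ :=
  ‖a - b‖ /
    (Real.sqrt (1 + ‖a‖ ^ 2) * Real.sqrt (1 + ‖b‖ ^ 2))

open ComplexConjugate

lemma norm_one_add_conj_mul_sq_add_norm_sub_sq (b c : ℂ) :
    ‖1 + conj b * c‖ ^ 2 + ‖b - c‖ ^ 2 = (1 + ‖b‖ ^ 2) * (1 + ‖c‖ ^ 2) := by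
  simp only [Complex.sq_norm, Complex.normSq_apply, Complex.add_re, Complex.add_im,
    Complex.sub_re, Complex.sub_im, Complex.one_re, Complex.one_im, Complex.mul_re,
    Complex.mul_im, Complex.conj_re, Complex.conj_im]
  ring

lemma norm_one_add_conj_mul_le (b c : ℂ) :
    ‖1 + conj b * c‖ ≤ √(1 + ‖b‖ ^ 2) * √(1 + ‖c‖ ^ 2) := by
  rw [← Real.sqrt_mul (by positivity), Real.le_sqrt (norm_nonneg _) (by positivity),
    ← norm_one_add_conj_mul_sq_add_norm_sub_sq]
  exact le_add_of_nonneg_right (sq_nonneg _)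

lemma norm_one_add_conj_mul_self (b : ℂ) : ‖1 + conj b * b‖ = √(1 + ‖b‖ ^ 2) ^ 2 := by
  rw [Complex.conj_mul', Real.sq_sqrt (by positivity)]
  norm_cast
  exact Real.norm_of_nonneg (by positivity)

lemma kappa_self (a : ℂ) : kappa a a = 0 := by
  simp [kappa]

lemma kappa_triangle (a b c : ℂ) : kappa a c ≤ kappa a b + kappa b c := by
  rw [kappa, kappa, kappa]
  set A := √(1 + ‖a‖ ^ 2)
  set B := √(1 + ‖b‖ ^ 2)
  set C := √(1 + ‖c‖ ^ 2)
  have hA : 0 < A := Real.sqrt_pos.mpr (by positivity)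
  have hB : 0 < B := Real.sqrt_pos.mpr (by positivity)
  have hC : 0 < C := Real.sqrt_pos.mpr (by positivity)
  have hB2 : ‖1 + conj b * b‖ = B ^ 2 := norm_one_add_conj_mul_self b
  calc ‖a - c‖ / (A * C) = ‖(a - c) * (1 + conj b * b)‖ / (A * B ^ 2 * C) := by
        rw [norm_mul, hB2]
        field_simp
    _ = ‖(a - b) * (1 + conj b * c) + (b - c) * (1 + conj b * a)‖ / (A * B ^ 2 * C) := by
        congr 2; ring
    _ ≤ (‖a - b‖ * (B * C) + ‖b - c‖ * (B * A)) / (A * B ^ 2 * C) := by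
        gcongr
        refine (norm_add_le _ _).trans ?_
        rw [norm_mul, norm_mul]
        gcongr
        · exact norm_one_add_conj_mul_le b c
        · exact norm_one_add_conj_mul_le b a
    _ = ‖a - b‖ / (A * B) + ‖b - c‖ / (B * C) := by
        field_simp

theorem pointwise_robust_stabilization_general (g₁ g₂ c : ℂ)
    (h : kappa g₁ g₂ < kappa g₁ c⁻¹) :
    1 - c * g₂ ≠ 0 ∧ kappa g₂ c⁻¹ ≥ kappa g₁ c⁻¹ - kappa g₁ g₂ := by
  have degradation : kappa g₂ c⁻¹ ≥ kappa g₁ c⁻¹ - kappa g₁ g₂ := by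
    linarith [kappa_triangle g₁ g₂ c⁻¹]
  refine ⟨fun singular => ?_, degradation⟩
  have hg₂ : g₂ = c⁻¹ := eq_inv_of_mul_eq_one_right (sub_eq_zero.mp singular).symm
  have margin_zero : kappa g₂ c⁻¹ = 0 := by rw [hg₂, kappa_self]
  linarith

theorem pointwise_robust_stabilization (g₁ g₂ c : ℂ) (hc : c ≠ 0)
    (h : kappa g₁ g₂ < kappa g₁ c⁻¹) :
    1 - c * g₂ ≠ 0 ∧ kappa g₂ c⁻¹ ≥ kappa g₁ c⁻¹ - kappa g₁ g₂ :=
  pointwise_robust_stabilization_general g₁ g₂ c h
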